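/- Let n ≥ 1, p ∈ [0,1], and let A, B ⊆ [n] be sets with |A| = |B| = r, |A ∩ B| = s and 2r − s ≤ n. Then for G ~ G(n,p), the probability that both A and B are dominating sets of G is at most ( 1 − 2(1−p)^r + (1−p)^{2r−s} )^{n−2r+s}. -/

import Mathlib

open MeasureTheory Filter
open scoped Classical

/-- The Bernoulli measure on `Bool` with success probability `p` (clamped to `[0,1]`). -/
noncomputable def bernoulliMeasure (p : ℝ) : Measure Bool :=
  (PMF.bernoulli (min (Real.toNNReal p) 1) (min_le_right _ _)).toMeasure

instance (p : ℝ) : IsProbabilityMeasure (bernoulliMeasure p) :=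
  PMF.toMeasure.isProbabilityMeasure _

/-- The Erdős–Rényi measure `G(n,p)`: every potential edge (pair of vertices of `Fin n`)
is present independently with probability `p`.  A sample point is an indicator function
on `Sym2 (Fin n)` (diagonal coordinates are simply ignored). -/
noncomputable def gnp (n : ℕ) (p : ℝ) : Measure (Sym2 (Fin n) → Bool) :=
  Measure.pi fun _ => bernoulliMeasure p

/-- The simple graph determined by an edge-indicator function. -/
def graphOf {n : ℕ} (f : Sym2 (Fin n) → Bool) : SimpleGraph (Fin n) where
  Adj v w := v ≠ w ∧ f s(v, w) = true
  symm := by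
    refine ⟨fun v w h => ?_⟩
    exact ⟨Ne.symm h.1, by rw [Sym2.eq_swap]; exact h.2⟩
  loopless := ⟨fun v h => h.1 rfl⟩

/-- A set `S` of vertices is dominating if every vertex is in `S` or adjacent to a member
of `S`. -/
def IsDominating {n : ℕ} (G : SimpleGraph (Fin n)) (S : Set (Fin n)) : Prop :=
  ∀ v, v ∈ S ∨ ∃ u ∈ S, G.Adj u v

/-- The domination number: the smallest cardinality of a dominating set. -/
noncomputable def domNumber {n : ℕ} (G : SimpleGraph (Fin n)) : ℕ :=
  sInf {r | ∃ S : Finset (Fin n), S.card = r ∧ IsDominating G ↑S}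

/-- The number of dominating sets of size `r`. -/
noncomputable def numDomSets {n : ℕ} (G : SimpleGraph (Fin n)) (r : ℕ) : ℕ :=
  ((Finset.powersetCard r (Finset.univ : Finset (Fin n))).filter
    (fun S => IsDominating G ↑S)).card

/-- The expected number of dominating sets of size `r` in `G(n,p)`:
`E(X_r) = C(n,r) (1-(1-p)^r)^(n-r)`. -/
noncomputable def EX (n r : ℕ) (p : ℝ) : ℝ :=
  (n.choose r : ℝ) * (1 - (1 - p) ^ r) ^ (n - r)

/-- The critical size `r̂ = min{ r | E(X_r) ≥ 1/d } - 1`, where `d = np`. -/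
noncomputable def rhat (n : ℕ) (p : ℝ) : ℕ :=
  sInf {r : ℕ | EX n r p ≥ 1 / (n * p)} - 1

/-!
If both `A` and `B` dominate, every vertex `v` outside `A ∪ B` has a neighbour in `A` and a
neighbour in `B`. This event only involves the edges from `v` to `A ∪ B`, and by
inclusion–exclusion it has probability `1 - 2(1-p)^r + (1-p)^|A ∪ B|`, where `|A ∪ B| = 2r - s`.
The edge sets belonging to distinct vertices outside `A ∪ B` are disjoint, so these
`n - 2r + s` events are independent and their probabilities multiply.
-/

namespace MeasureTheory.Measure

variable {ι : Type*} [Fintype ι] {α : ι → Type*} [∀ i, MeasurableSpace (α i)]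
  [∀ i, Countable (α i)] [∀ i, MeasurableSingletonClass (α i)]
  {μ : ∀ i, Measure (α i)} [∀ i, IsProbabilityMeasure (μ i)]

open ProbabilityTheory in
theorem pi_inter_eq_mul_of_dependsOn {P Q : Set (∀ i, α i)} {S T : Finset ι}
    (hST : Disjoint S T) (hP : DependsOn (· ∈ P) S) (hQ : DependsOn (· ∈ Q) T) :
    Measure.pi μ (P ∩ Q) = Measure.pi μ P * Measure.pi μ Q := by
  have hindep : IndepFun (fun x (i : S) ↦ x i) (fun x (i : T) ↦ x i) (Measure.pi μ) :=
    (iIndepFun_pi (X := fun _ ↦ id) fun _ ↦ aemeasurable_id).indepFun_finset S T hST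
      fun i ↦ measurable_pi_apply i
  obtain ⟨P', hP'⟩ := dependsOn_iff_exists_comp.mp hP
  obtain ⟨Q', hQ'⟩ := dependsOn_iff_exists_comp.mp hQ
  have hPpre : P = (fun x (i : S) ↦ x i) ⁻¹' {y | P' y} :=
    Set.ext fun x ↦ (congrFun hP' x).to_iff
  have hQpre : Q = (fun x (i : T) ↦ x i) ⁻¹' {y | Q' y} :=
    Set.ext fun x ↦ (congrFun hQ' x).to_iff
  rw [hPpre, hQpre]
  exact hindep.measure_inter_preimage_eq_mul _ _ (Set.to_countable _).measurableSet
    (Set.to_countable _).measurableSet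

theorem pi_biInter_eq_prod_of_dependsOn {V : Type*} (C : Finset V) (E : V → Set (∀ i, α i))
    (S : V → Finset ι) (hE : ∀ v ∈ C, DependsOn (· ∈ E v) (S v))
    (hS : (C : Set V).PairwiseDisjoint S) :
    Measure.pi μ (⋂ v ∈ C, E v) = ∏ v ∈ C, Measure.pi μ (E v) := by
  classical
  induction C using Finset.induction_on with
  | empty => simp
  | insert w C hw ih =>
    have hrest : DependsOn (· ∈ ⋂ v ∈ C, E v) (C.biUnion S) := by
      intro x y hxy
      simp only [Set.mem_iInter, eq_iff_iff]
      refine forall₂_congr fun v hv ↦ (hE v (C.mem_insert_of_mem hv) fun i hi ↦ hxy i ?_).to_iff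
      exact Finset.mem_biUnion.mpr ⟨v, hv, hi⟩
    have hdisj : Disjoint (S w) (C.biUnion S) := by
      refine (Finset.disjoint_biUnion_right _ _ _).mpr fun v hv ↦ hS (by simp) (by simp [hv]) ?_
      rintro rfl; exact hw hv
    rw [Finset.set_biInter_insert, Finset.prod_insert hw,
      pi_inter_eq_mul_of_dependsOn hdisj (hE w (C.mem_insert_self w)) hrest,
      ih (fun v hv ↦ hE v (C.mem_insert_of_mem hv)) (hS.subset (by simp))]

end MeasureTheory.Measure

theorem bernoulliMeasure_real_false {p : ℝ} (hp0 : 0 ≤ p) (hp1 : p ≤ 1) :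
    (bernoulliMeasure p).real {false} = 1 - p := by
  have hmin : min (Real.toNNReal p) 1 = Real.toNNReal p :=
    min_eq_left (Real.toNNReal_le_one.mpr hp1)
  rw [measureReal_def, bernoulliMeasure,
    PMF.toMeasure_apply_singleton _ _ (measurableSet_singleton _), PMF.bernoulli_apply,
    Bool.cond_false, hmin, ENNReal.coe_toReal, NNReal.coe_sub (Real.toNNReal_le_one.mpr hp1),
    NNReal.coe_one, Real.coe_toNNReal _ hp0]

instance (n : ℕ) (p : ℝ) : IsProbabilityMeasure (gnp n p) := by
  unfold gnp; infer_instance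

def hasNeighborIn {n : ℕ} (D : Finset (Fin n)) (v : Fin n) : Set (Sym2 (Fin n) → Bool) :=
  {f | ∃ u ∈ D, f s(u, v) = true}

theorem hasNeighborIn_dependsOn {n : ℕ} (D : Finset (Fin n)) (v : Fin n) :
    DependsOn (· ∈ hasNeighborIn D v) (D.image (s(·, v))) := by
  intro f g hfg
  simp only [hasNeighborIn, eq_iff_iff]
  exact exists_congr fun u ↦ and_congr_right fun hu ↦ by
    rw [hfg _ (Finset.mem_coe.mpr (Finset.mem_image_of_mem _ hu))]

theorem hasNeighborIn_union {n : ℕ} (A B : Finset (Fin n)) (v : Fin n) :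
    hasNeighborIn (A ∪ B) v = hasNeighborIn A v ∪ hasNeighborIn B v := by
  ext f
  simp [hasNeighborIn, or_and_right, exists_or]

theorem gnp_real_hasNeighborIn {n : ℕ} {p : ℝ} (hp0 : 0 ≤ p) (hp1 : p ≤ 1)
    {D : Finset (Fin n)} {v : Fin n} (hv : v ∉ D) :
    (gnp n p).real (hasNeighborIn D v) = 1 - (1 - p) ^ D.card := by
  have hcompl : (hasNeighborIn D v)ᶜ = (↑(D.image (s(·, v))) : Set _).pi fun _ ↦ {false} := by
    ext f
    simp [hasNeighborIn]
  have hinj : Set.InjOn (s(·, v)) D := by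
    intro u _ w hw huw
    rcases Sym2.eq_iff.mp huw with ⟨h, -⟩ | ⟨rfl, rfl⟩
    · exact h
    · exact absurd hw hv
  have hnone : (gnp n p).real (hasNeighborIn D v)ᶜ = (1 - p) ^ D.card := by
    rw [hcompl, measureReal_def, gnp, Measure.pi_pi_finset, ENNReal.toReal_prod,
      Finset.prod_image hinj]
    simp only [← measureReal_def, bernoulliMeasure_real_false hp0 hp1, Finset.prod_const]
  rw [probReal_compl_eq_one_sub (Set.to_countable _).measurableSet] at hnone
  linarith

theorem gnp_real_hasNeighborIn_inter {n : ℕ} {p : ℝ} (hp0 : 0 ≤ p) (hp1 : p ≤ 1)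
    {A B : Finset (Fin n)} {v : Fin n} (hv : v ∉ A ∪ B) :
    (gnp n p).real (hasNeighborIn A v ∩ hasNeighborIn B v) =
      1 - (1 - p) ^ A.card - (1 - p) ^ B.card + (1 - p) ^ (A ∪ B).card := by
  have hincl_excl := measureReal_union_add_inter (μ := gnp n p) (s := hasNeighborIn A v)
    (Set.to_countable (hasNeighborIn B v)).measurableSet
  rw [← hasNeighborIn_union, gnp_real_hasNeighborIn hp0 hp1 hv,
    gnp_real_hasNeighborIn hp0 hp1 (fun h ↦ hv (Finset.mem_union_left B h)),
    gnp_real_hasNeighborIn hp0 hp1 (fun h ↦ hv (Finset.mem_union_right A h))] at hincl_excl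
  linarith

theorem pairwiseDisjoint_image_mk_compl {n : ℕ} (D : Finset (Fin n)) :
    (↑Dᶜ : Set (Fin n)).PairwiseDisjoint fun v ↦ D.image (s(·, v)) := by
  intro v _ w hw hvw
  refine Finset.disjoint_left.mpr fun e he he' ↦ ?_
  obtain ⟨u, hu, rfl⟩ := Finset.mem_image.mp he
  obtain ⟨u', -, he⟩ := Finset.mem_image.mp he'
  rcases Sym2.eq_iff.mp he with ⟨-, rfl⟩ | ⟨-, rfl⟩
  · exact hvw rfl
  · exact Finset.mem_compl.mp hw hu

theorem gnp_real_biInter_hasNeighborIn_inter (n : ℕ) (p : ℝ) (A B : Finset (Fin n)) :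
    (gnp n p).real (⋂ v ∈ (A ∪ B)ᶜ, hasNeighborIn A v ∩ hasNeighborIn B v) =
      ∏ v ∈ (A ∪ B)ᶜ, (gnp n p).real (hasNeighborIn A v ∩ hasNeighborIn B v) := by
  have hdep : ∀ v, DependsOn (· ∈ hasNeighborIn A v ∩ hasNeighborIn B v)
      ((A ∪ B).image (s(·, v))) := by
    intro v f g hfg
    rw [Finset.image_union, Finset.coe_union] at hfg
    simp only [Set.mem_inter_iff,
      hasNeighborIn_dependsOn A v fun i hi ↦ hfg i (Or.inl hi),
      hasNeighborIn_dependsOn B v fun i hi ↦ hfg i (Or.inr hi)]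
  rw [measureReal_def, gnp, Measure.pi_biInter_eq_prod_of_dependsOn _ _ _
    (fun v _ ↦ hdep v) (pairwiseDisjoint_image_mk_compl _), ENNReal.toReal_prod]
  rfl

theorem IsDominating.mem_hasNeighborIn {n : ℕ} {f : Sym2 (Fin n) → Bool} {D : Finset (Fin n)}
    (hD : IsDominating (graphOf f) D) {v : Fin n} (hv : v ∉ D) : f ∈ hasNeighborIn D v := by
  rcases hD v with h | ⟨u, hu, -, huv⟩
  · exact absurd h hv
  · exact ⟨u, hu, huv⟩

theorem stmt_15_general (n r s : ℕ) (p : ℝ) (hp0 : 0 ≤ p) (hp1 : p ≤ 1)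
    (A B : Finset (Fin n)) (hA : A.card = r) (hB : B.card = r)
    (hAB : (A ∩ B).card = s) :
    gnp n p {f | IsDominating (graphOf f) ↑A ∧ IsDominating (graphOf f) ↑B} ≤
      ENNReal.ofReal
        ((1 - 2 * (1 - p) ^ r + (1 - p) ^ (2 * r - s)) ^ (n + s - 2 * r)) := by
  have hsr : s ≤ r := hAB ▸ hA ▸ Finset.card_le_card Finset.inter_subset_left
  have hunion : (A ∪ B).card = 2 * r - s := by
    have := Finset.card_union_add_card_inter A B
    omega
  have houtside : (A ∪ B)ᶜ.card = n + s - 2 * r := by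
    rw [Finset.card_compl, Fintype.card_fin]
    omega
  have hvertex : ∀ v ∈ (A ∪ B)ᶜ, (gnp n p).real (hasNeighborIn A v ∩ hasNeighborIn B v) =
      1 - 2 * (1 - p) ^ r + (1 - p) ^ (2 * r - s) := fun v hv ↦ by
    rw [gnp_real_hasNeighborIn_inter hp0 hp1 (Finset.mem_compl.mp hv), hA, hB, hunion]
    ring
  have hsub : {f | IsDominating (graphOf f) ↑A ∧ IsDominating (graphOf f) ↑B} ⊆
      ⋂ v ∈ (A ∪ B)ᶜ, hasNeighborIn A v ∩ hasNeighborIn B v := by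
    rintro f ⟨hfA, hfB⟩
    simp only [Set.mem_iInter, Finset.mem_compl, Finset.mem_union, not_or]
    exact fun v ⟨hvA, hvB⟩ ↦ ⟨hfA.mem_hasNeighborIn hvA, hfB.mem_hasNeighborIn hvB⟩
  calc _ ≤ gnp n p (⋂ v ∈ (A ∪ B)ᶜ, hasNeighborIn A v ∩ hasNeighborIn B v) := measure_mono hsub
    _ = _ := by
      rw [← ofReal_measureReal, gnp_real_biInter_hasNeighborIn_inter,
        Finset.prod_congr rfl hvertex, Finset.prod_const, houtside]

/-- for sets `A, B` of size `r` with `|A ∩ B| = s` and `2r - s ≤ n`,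
the probability that both `A` and `B` dominate `G(n,p)` is at most
`(1 - 2(1-p)^r + (1-p)^{2r-s})^{n-2r+s}`. -/
theorem stmt_15 (n r s : ℕ) (hn : 1 ≤ n) (p : ℝ) (hp0 : 0 ≤ p) (hp1 : p ≤ 1)
    (A B : Finset (Fin n)) (hA : A.card = r) (hB : B.card = r)
    (hAB : (A ∩ B).card = s) (hrs : 2 * r ≤ n + s) :
    gnp n p {f | IsDominating (graphOf f) ↑A ∧ IsDominating (graphOf f) ↑B} ≤
      ENNReal.ofReal
        ((1 - 2 * (1 - p) ^ r + (1 - p) ^ (2 * r - s)) ^ (n + s - 2 * r)) :=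
  stmt_15_general n r s p hp0 hp1 A B hA hB hAB
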